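/- arXiv:1904.01051 — 2 statements merged into one kernel-verified Lean document; each statement's English description precedes it below -/
import Mathlib

section
/- Let ℓ ∈ ℝ^r be a generic length vector with nonnegative weakly increasing components. If there is an ℓ-long subset J ⊆ {1,...,r} of size #J = μ(ℓ), then ℓ is equivalent to the length vector (0,...,0,1,...,1) with exactly 2μ(ℓ)−1 entries equal to 1, i.e., a subset of {1,...,r} is ℓ-long if and only if it contains at least μ(ℓ) elements from {r−2μ(ℓ)+2,...,r}. -/
open Finset

/-- `J` is `ℓ`-long if the sum of `ℓ` over `J` exceeds the sum over its complement. -/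
def IsLong {r : ℕ} (ℓ : Fin r → ℝ) (J : Finset (Fin r)) : Prop :=
  ∑ j ∈ Jᶜ, ℓ j < ∑ j ∈ J, ℓ j

/-- `ℓ` is generic if no subset sum equals the complementary sum. -/
def IsGeneric {r : ℕ} (ℓ : Fin r → ℝ) : Prop :=
  ∀ J : Finset (Fin r), ∑ j ∈ J, ℓ j ≠ ∑ j ∈ Jᶜ, ℓ j

open scoped Classical in
/-- `σ_ℓ(J)`: the number of `j ∈ J` such that `J \ {j}` is `ℓ`-short. -/
noncomputable def sigmaL {r : ℕ} (ℓ : Fin r → ℝ) (J : Finset (Fin r)) : ℕ :=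
  (J.filter (fun j => ¬ IsLong ℓ (J.erase j))).card

/-- `μ(ℓ) = min { σ_ℓ(J) : J ℓ-long, σ_ℓ(J) > 0 }`. -/
noncomputable def muL {r : ℕ} (ℓ : Fin r → ℝ) : ℕ :=
  sInf {n : ℕ | 0 < n ∧ ∃ J : Finset (Fin r), IsLong ℓ J ∧ sigmaL ℓ J = n}

/-!
Write `μ = μ(ℓ)` and `T` for the last `2μ - 1` indices. A long set has at least `μ` elements,
since a minimal long subset `K` has `σ(K) = #K`; so sets of size `μ - 1` are short, their
complements are long, and `2μ - 1 ≤ r`.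

The heart is that every `μ`-subset of `T` is long. If `S ⊆ T` of size `μ` is short and
`a = min S`, put `S' = S \ {a}`. Then `S'ᶜ` is long and `σ(S'ᶜ)` counts the `k ∉ S'` with
`S' ∪ {k}` long; by monotonicity of `ℓ` they all lie above `a`, and fewer than `μ` indices outside
`S'` do, so `σ(S'ᶜ) = 0` by minimality of `μ`. Hence `a` may be replaced by any larger index
keeping `S` short, and pushing `S` upwards reaches the top `μ` indices. The same upward exchange
applied to a long `μ`-set shows that these are long, a contradiction.

Since `#T = 2μ - 1`, either `J` or `Jᶜ` contains `μ` elements of `T`, which decides which of the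
two is long.
-/

section FinsetLemmas

theorem Finset.card_insert_erase_of_mem_of_notMem {α : Type*} [DecidableEq α] {U : Finset α}
    {a j : α} (ha : a ∈ U) (hj : j ∉ U) : #(insert j (U.erase a)) = #U := by
  rw [card_insert_of_notMem fun h => hj (mem_of_mem_erase h), card_erase_add_one ha]

theorem Finset.card_filter_add_card_compl_filter {α : Type*} [Fintype α] [DecidableEq α]
    (p : α → Prop) [DecidablePred p] (J : Finset α) :
    #(J.filter p) + #(Jᶜ.filter p) = #(univ.filter p) := by
  rw [← card_union_of_disjoint (disjoint_filter_filter disjoint_compl_right), ← filter_union,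
    union_compl]

theorem Fin.card_filter_succ_le_val_add {r k : ℕ} (hk : k ≤ r + 1) :
    #{j : Fin r | r + 1 ≤ (j : ℕ) + k} = k - 1 := by
  have hsplit :=
    card_filter_add_card_filter_not (s := univ) fun j : Fin r => (j : ℕ) < r + 1 - k
  rw [card_filter_val_lt, card_univ, Fintype.card_fin] at hsplit
  rw [filter_congr fun (j : Fin r) _ =>
    show r + 1 ≤ (j : ℕ) + k ↔ ¬ (j : ℕ) < r + 1 - k by omega]
  omega

variable {α : Type*} [LinearOrder α]

theorem Finset.eq_of_isUpperSet_of_card_eq {U V : Finset α} (hU : IsUpperSet (U : Set α))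
    (hV : IsUpperSet (V : Set α)) (h : #U = #V) : U = V := by
  rcases hU.total hV with hUV | hVU
  · exact eq_of_subset_of_card_le (coe_subset.1 hUV) h.ge
  · exact (eq_of_subset_of_card_le (coe_subset.1 hVU) h.le).symm

theorem Finset.exists_isUpperSet_of_insert_erase_min' [Fintype α] (P : Finset α → Prop)
    (hP : ∀ U, P U → ∀ (hU : U.Nonempty) (j : α), j ∉ U → U.min' hU < j →
      P (insert j (U.erase (U.min' hU))))
    {S : Finset α} (hS : P S) : ∃ U, P U ∧ #U = #S ∧ IsUpperSet (U : Set α) := by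
  classical
  let rank : α → ℕ := fun x => #{y | y < x}
  have rank_lt {a b : α} (hab : a < b) : rank a < rank b := by
    refine card_lt_card ((ssubset_iff_of_subset fun y => ?_).2 ⟨a, by simpa using hab, by simp⟩)
    simpa using fun hy => hy.trans hab
  obtain ⟨U, hU, hmax⟩ := exists_max_image {U | P U ∧ #U = #S} (fun U => ∑ x ∈ U, rank x)
    ⟨S, by simpa using hS⟩
  simp only [mem_filter, mem_univ, true_and] at hU hmax
  refine ⟨U, hU.1, hU.2, fun a b hab ha => ?_⟩
  by_contra hb
  have hne : U.Nonempty := ⟨a, ha⟩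
  have hmin : U.min' hne ∈ U := min'_mem U hne
  have hlt : U.min' hne < b :=
    (min'_le U a ha).trans_lt (lt_of_le_of_ne hab (by rintro rfl; exact hb ha))
  have hle := hmax _
    ⟨hP U hU.1 hne b hb hlt, (card_insert_erase_of_mem_of_notMem hmin hb).trans hU.2⟩
  rw [sum_insert fun h => hb (mem_of_mem_erase h), ← sum_erase_add U rank hmin] at hle
  exact absurd hle (by simpa [add_comm] using rank_lt hlt)

end FinsetLemmas

section LengthVector

variable {r : ℕ} {ℓ : Fin r → ℝ}

theorem isLong_iff_sum_lt (J : Finset (Fin r)) :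
    IsLong ℓ J ↔ ∑ j, ℓ j < 2 * ∑ j ∈ J, ℓ j := by
  rw [IsLong, ← sum_compl_add_sum J ℓ]
  constructor <;> intro h <;> linarith

theorem IsLong.of_sum_le {J K : Finset (Fin r)} (hJ : IsLong ℓ J)
    (h : ∑ j ∈ J, ℓ j ≤ ∑ j ∈ K, ℓ j) : IsLong ℓ K := by
  rw [isLong_iff_sum_lt] at hJ ⊢
  linarith

theorem IsLong.mono (hpos : ∀ j, 0 ≤ ℓ j) {J K : Finset (Fin r)} (hJK : J ⊆ K)
    (hJ : IsLong ℓ J) : IsLong ℓ K :=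
  hJ.of_sum_le (sum_le_sum_of_subset_of_nonneg hJK fun j _ _ => hpos j)

theorem IsLong.insert_of_le {S : Finset (Fin r)} {j k : Fin r} (h : IsLong ℓ (insert j S))
    (hj : j ∉ S) (hk : k ∉ S) (hjk : ℓ j ≤ ℓ k) : IsLong ℓ (insert k S) :=
  h.of_sum_le (by rw [sum_insert hj, sum_insert hk]; linarith)

theorem IsLong.insert_erase_of_le (hmono : Monotone ℓ) {U : Finset (Fin r)} {a j : Fin r}
    (hU : IsLong ℓ U) (ha : a ∈ U) (hj : j ∉ U) (haj : a ≤ j) :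
    IsLong ℓ (insert j (U.erase a)) := by
  rw [← insert_erase ha] at hU
  exact hU.insert_of_le (notMem_erase _ _) (fun h => hj (mem_of_mem_erase h)) (hmono haj)

theorem not_isLong_empty (hpos : ∀ j, 0 ≤ ℓ j) : ¬ IsLong ℓ ∅ := by
  simpa [IsLong] using sum_nonneg fun j _ => hpos j

theorem isLong_compl_iff (hg : IsGeneric ℓ) (J : Finset (Fin r)) :
    IsLong ℓ Jᶜ ↔ ¬ IsLong ℓ J := by
  rw [IsLong, IsLong, compl_compl, not_lt]
  exact ⟨le_of_lt, fun h => lt_of_le_of_ne h (hg J)⟩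

theorem muL_le_card (hpos : ∀ j, 0 ≤ ℓ j) {J : Finset (Fin r)} (hJ : IsLong ℓ J) :
    muL ℓ ≤ #J := by
  classical
  induction J using Finset.strongInduction with
  | H J ih =>
    by_cases h : ∃ j ∈ J, IsLong ℓ (J.erase j)
    · obtain ⟨j, hj, hlong⟩ := h
      exact (ih _ (erase_ssubset hj) hlong).trans card_erase_le
    · push Not at h
      have hσ : sigmaL ℓ J = #J := by
        unfold sigmaL
        rw [filter_true_of_mem h]
      have hne : J.Nonempty :=
        nonempty_iff_ne_empty.2 (by rintro rfl; exact not_isLong_empty hpos hJ)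
      exact hσ ▸ Nat.sInf_le ⟨hσ ▸ hne.card_pos, J, hJ, rfl⟩

theorem two_mul_muL_le (hg : IsGeneric ℓ) (hpos : ∀ j, 0 ≤ ℓ j) (hμ : 1 ≤ muL ℓ)
    (hμr : muL ℓ ≤ r) : 2 * muL ℓ ≤ r + 1 := by
  classical
  obtain ⟨A, -, hA⟩ := exists_subset_card_eq (s := (univ : Finset (Fin r))) (n := muL ℓ - 1)
    (by rw [card_univ, Fintype.card_fin]; omega)
  have hAshort : ¬ IsLong ℓ A := fun h => by have := muL_le_card hpos h; omega
  have := muL_le_card hpos ((isLong_compl_iff hg A).2 hAshort)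
  rw [card_compl, hA, Fintype.card_fin] at this
  omega

theorem sigmaL_eq_zero_of_lt_muL {V : Finset (Fin r)} (hV : IsLong ℓ V)
    (h : sigmaL ℓ V < muL ℓ) : sigmaL ℓ V = 0 := by
  by_contra h0
  have hmem : sigmaL ℓ V ∈ {n | 0 < n ∧ ∃ J, IsLong ℓ J ∧ sigmaL ℓ J = n} :=
    ⟨Nat.pos_of_ne_zero h0, V, hV, rfl⟩
  exact (Nat.sInf_le hmem).not_gt h

open scoped Classical in
theorem sigmaL_compl (hg : IsGeneric ℓ) (S : Finset (Fin r)) :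
    sigmaL ℓ Sᶜ = #{j ∈ Sᶜ | IsLong ℓ (insert j S)} := by
  unfold sigmaL
  congr 1
  refine filter_congr fun j hj => ?_
  rw [← compl_insert, isLong_compl_iff hg, not_not]

theorem not_isLong_insert_of_not_isLong_insert (hg : IsGeneric ℓ) (hpos : ∀ j, 0 ≤ ℓ j)
    (hmono : Monotone ℓ) {S : Finset (Fin r)} {a j : Fin r} (hS : #S + 1 = muL ℓ)
    (haS : ∀ x ∈ S, a < x) (ha : r + 1 ≤ (a : ℕ) + 2 * muL ℓ)
    (hshort : ¬ IsLong ℓ (insert a S)) (hj : j ∉ S) : ¬ IsLong ℓ (insert j S) := by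
  classical
  have hSshort : ¬ IsLong ℓ S := fun h => by have := muL_le_card hpos h; omega
  have hsub : {k ∈ Sᶜ | IsLong ℓ (insert k S)} ⊆ Ioi a \ S := by
    intro k hk
    rw [mem_filter, mem_compl] at hk
    refine mem_sdiff.2 ⟨mem_Ioi.2 (lt_of_not_ge fun hka => hshort ?_), hk.1⟩
    exact hk.2.insert_of_le hk.1 (fun h => lt_irrefl a (haS a h)) (hmono hka)
  have hcard : #(Ioi a \ S) < muL ℓ := by
    rw [card_sdiff_of_subset fun x hx => mem_Ioi.2 (haS x hx), Fin.card_Ioi]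
    omega
  have hσ := sigmaL_eq_zero_of_lt_muL ((isLong_compl_iff hg S).2 hSshort)
    (by rw [sigmaL_compl hg]; exact (card_le_card hsub).trans_lt hcard)
  rw [sigmaL_compl hg, card_eq_zero, filter_eq_empty_iff] at hσ
  exact hσ (mem_compl.2 hj)

theorem isLong_of_card_eq_muL (hg : IsGeneric ℓ) (hpos : ∀ j, 0 ≤ ℓ j) (hmono : Monotone ℓ)
    {J₀ : Finset (Fin r)} (hJ₀ : IsLong ℓ J₀) (hJ₀card : #J₀ = muL ℓ) {S : Finset (Fin r)}
    (hST : ∀ j ∈ S, r + 1 ≤ (j : ℕ) + 2 * muL ℓ) (hS : #S = muL ℓ) : IsLong ℓ S := by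
  classical
  by_contra hshort
  let P (U : Finset (Fin r)) : Prop :=
    (∀ j ∈ U, r + 1 ≤ (j : ℕ) + 2 * muL ℓ) ∧ #U = muL ℓ ∧ ¬ IsLong ℓ U
  have hP : ∀ U, P U → ∀ (hU : U.Nonempty) (j : Fin r), j ∉ U → U.min' hU < j →
      P (insert j (U.erase (U.min' hU))) := by
    rintro U ⟨hUT, hUcard, hUshort⟩ hne j hj hlt
    have hmin := min'_mem U hne
    refine ⟨fun x hx => ?_, (card_insert_erase_of_mem_of_notMem hmin hj).trans hUcard, ?_⟩
    · rcases mem_insert.1 hx with rfl | hx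
      · have : (U.min' hne : ℕ) < x := hlt
        have := hUT _ hmin
        omega
      · exact hUT x (mem_of_mem_erase hx)
    · refine not_isLong_insert_of_not_isLong_insert hg hpos hmono ?_
        (fun x => min'_lt_of_mem_erase_min' U hne) (hUT _ hmin) (by rwa [insert_erase hmin])
        (fun h => hj (mem_of_mem_erase h))
      rw [card_erase_add_one hmin, hUcard]
  obtain ⟨U, ⟨-, hUcard, hUshort⟩, -, hU⟩ :=
    exists_isUpperSet_of_insert_erase_min' P hP (S := S) ⟨hST, hS, hshort⟩
  obtain ⟨V, hV, hVcard, hVU⟩ := exists_isUpperSet_of_insert_erase_min' (IsLong ℓ)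
    (fun U hU hne _ hj hlt => hU.insert_erase_of_le hmono (min'_mem U hne) hj hlt.le) hJ₀
  exact hUshort (eq_of_isUpperSet_of_card_eq hVU hU (by omega) ▸ hV)

end LengthVector

theorem equiv_of_long_card_eq_mu {r : ℕ} (ℓ : Fin r → ℝ) (hg : IsGeneric ℓ)
    (hpos : ∀ j, 0 ≤ ℓ j) (hmono : Monotone ℓ)
    (hJ : ∃ J : Finset (Fin r), IsLong ℓ J ∧ J.card = muL ℓ) :
    ∀ J : Finset (Fin r), IsLong ℓ J ↔
      muL ℓ ≤ (J.filter (fun j : Fin r => r + 1 ≤ (j : ℕ) + 2 * muL ℓ)).card := by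
  classical
  obtain ⟨J₀, hJ₀, hJ₀card⟩ := hJ
  have hμ : 1 ≤ muL ℓ := by
    rw [← hJ₀card, Nat.one_le_iff_ne_zero, Ne, card_eq_zero]
    rintro rfl
    exact not_isLong_empty hpos hJ₀
  have hμr : muL ℓ ≤ r := hJ₀card ▸ (card_le_univ J₀).trans_eq (Fintype.card_fin r)
  have hT := Fin.card_filter_succ_le_val_add (two_mul_muL_le hg hpos hμ hμr)
  have hlong : ∀ K : Finset (Fin r),
      muL ℓ ≤ (K.filter fun j : Fin r => r + 1 ≤ (j : ℕ) + 2 * muL ℓ).card → IsLong ℓ K := by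
    intro K hK
    obtain ⟨S, hSK, hS⟩ := exists_subset_card_eq hK
    exact (isLong_of_card_eq_muL hg hpos hmono hJ₀ hJ₀card
      (fun j hj => (mem_filter.1 (hSK hj)).2) hS).mono hpos (hSK.trans (filter_subset _ _))
  refine fun J => ⟨fun hJ => ?_, hlong J⟩
  by_contra hlt
  have := card_filter_add_card_compl_filter (fun j : Fin r => r + 1 ≤ (j : ℕ) + 2 * muL ℓ) J
  exact (isLong_compl_iff hg J).1 (hlong Jᶜ (by omega)) hJ
end

section
/- Let r = 2m+2 be even and ℓ ∈ ℝ^r a generic length vector with nonnegative weakly increasing components. Then μ(ℓ) = m+1 if and only if ℓ is equivalent to (0,1,...,1), i.e., a subset J ⊆ {1,...,r} is ℓ-long if and only if #(J ∩ {2,...,r}) ≥ m+1. -/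
/-!
Suppose every long set `J` has `σ(J) = 0` or `σ(J) ≥ m + 1`. If `J` is long with `m + 1`
elements, `a ∉ J` and `b ∈ J` with `ℓ b ≤ ℓ a`, then in `Q = J ∪ {a}` the erasures of `a` and
of `b` are long, so `σ(Q) ≤ m`, hence `σ(Q) = 0`: every element of `J` may be exchanged for `a`
without making `J` short. Counting indices from `0`: if `{1, …, m+1}` were short, its complement
`{0, m+2, …, 2m+1}` would be long, and exchanges keeping `0` would make `{0, …, m}` long,
although its complement dominates it termwise. So `{1, …, m+1}` is long, and by monotonicity
`J` is long exactly when it contains at least `m + 1` indices `≥ 1`. Conversely, under that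
description `σ(J)` is `m + 1` or `0` for every long `J`.
-/

open Finset

theorem Finset.sum_le_sum_of_card_le_of_separated {ι M : Type*} [DecidableEq ι]
    [AddCommMonoid M] [PartialOrder M] [IsOrderedAddMonoid M] {f : ι → M} {X Y : Finset ι}
    {c : M} (hc : 0 ≤ c) (hcard : #X ≤ #Y) (hX : ∀ i ∈ X \ Y, f i ≤ c)
    (hY : ∀ i ∈ Y \ X, c ≤ f i) : ∑ i ∈ X, f i ≤ ∑ i ∈ Y, f i := by
  rw [← sum_inter_add_sum_sdiff X Y, ← sum_inter_add_sum_sdiff Y X, inter_comm]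
  refine add_le_add le_rfl ?_
  calc ∑ i ∈ X \ Y, f i ≤ #(X \ Y) • c := sum_le_card_nsmul _ _ _ hX
    _ ≤ #(Y \ X) • c := nsmul_le_nsmul_left hc (card_sdiff_le_card_sdiff_iff.2 hcard)
    _ ≤ ∑ i ∈ Y \ X, f i := card_nsmul_le_sum _ _ _ hY

section LengthVector

variable {r : ℕ} {ℓ : Fin r → ℝ}

theorem isLong_iff_lt_two_mul_sum {J : Finset (Fin r)} :
    IsLong ℓ J ↔ ∑ j, ℓ j < 2 * ∑ j ∈ J, ℓ j := by
  have := sum_add_sum_compl J ℓ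
  unfold IsLong
  constructor <;> intro <;> linarith

theorem IsLong.not_isLong_compl {J : Finset (Fin r)} (hJ : IsLong ℓ J) : ¬IsLong ℓ Jᶜ := by
  unfold IsLong at *
  rw [compl_compl]
  exact hJ.le.not_gt

theorem IsGeneric.isLong_compl (hg : IsGeneric ℓ) {J : Finset (Fin r)} (hJ : ¬IsLong ℓ J) :
    IsLong ℓ Jᶜ := by
  unfold IsLong at *
  rw [compl_compl]
  exact (not_lt.1 hJ).lt_of_ne (hg J)

theorem sigmaL_eq_zero_iff {J : Finset (Fin r)} :
    sigmaL ℓ J = 0 ↔ ∀ j ∈ J, IsLong ℓ (J.erase j) := by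
  simp only [sigmaL, card_eq_zero, filter_eq_empty_iff, not_not]

theorem sigmaL_le_card_sub_two {Q : Finset (Fin r)} {a b : Fin r} (ha : a ∈ Q) (hb : b ∈ Q)
    (hab : a ≠ b) (hla : IsLong ℓ (Q.erase a)) (hlb : IsLong ℓ (Q.erase b)) :
    sigmaL ℓ Q ≤ #Q - 2 := by
  classical
  have hsub : Q.filter (fun j => ¬IsLong ℓ (Q.erase j)) ⊆ (Q.erase a).erase b := by
    intro j hj
    obtain ⟨hjQ, hj⟩ := mem_filter.1 hj
    refine mem_erase.2 ⟨?_, mem_erase.2 ⟨?_, hjQ⟩⟩ <;> rintro rfl <;> contradiction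
  calc sigmaL ℓ Q ≤ #((Q.erase a).erase b) := card_le_card hsub
    _ = #Q - 2 := by
      rw [card_erase_of_mem (mem_erase.2 ⟨hab.symm, hb⟩), card_erase_of_mem ha]
      omega

theorem muL_le_sigmaL {J : Finset (Fin r)} (hJ : IsLong ℓ J) (h : sigmaL ℓ J ≠ 0) :
    muL ℓ ≤ sigmaL ℓ J :=
  Nat.sInf_le ⟨Nat.pos_of_ne_zero h, J, hJ, rfl⟩

theorem IsLong.insert_erase (hpos : ∀ j, 0 ≤ ℓ j) {J : Finset (Fin r)} (hJ : IsLong ℓ J)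
    (hμ : #J ≤ muL ℓ) {a b c : Fin r} (ha : a ∉ J) (hb : b ∈ J) (hba : ℓ b ≤ ℓ a)
    (hc : c ∈ J) : IsLong ℓ (insert a (J.erase c)) := by
  have hbQ : b ∈ insert a J := mem_insert_of_mem hb
  have hQ : IsLong ℓ (insert a J) := hJ.of_sum_le (by rw [sum_insert ha]; linarith [hpos a])
  have hQa : IsLong ℓ ((insert a J).erase a) := by rwa [erase_insert ha]
  have hQb : IsLong ℓ ((insert a J).erase b) := hJ.of_sum_le (by
    have := sum_erase_add (insert a J) ℓ hbQ
    rw [sum_insert ha] at this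
    linarith)
  have hσ : sigmaL ℓ (insert a J) = 0 := by
    by_contra h
    have h1 := muL_le_sigmaL hQ h
    have h2 := sigmaL_le_card_sub_two (mem_insert_self a J) hbQ
      (ne_of_mem_of_not_mem hb ha).symm hQa hQb
    rw [card_insert_of_notMem ha] at h2
    have := card_pos.2 ⟨b, hb⟩
    omega
  have := sigmaL_eq_zero_iff.1 hσ c (mem_insert_of_mem hc)
  rwa [erase_insert_of_ne (ne_of_mem_of_not_mem hc ha).symm] at this

theorem IsLong.of_card_eq (hpos : ∀ j, 0 ≤ ℓ j) {z : Fin r} (hz : ∀ j, ℓ z ≤ ℓ j)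
    {J T : Finset (Fin r)} (hJ : IsLong ℓ J) (hμ : #J ≤ muL ℓ) (hzJ : z ∈ J) (hzT : z ∈ T)
    (hcard : #T = #J) : IsLong ℓ T := by
  induction hn : #(J \ T) using Nat.strong_induction_on generalizing J with
  | _ n ih =>
  obtain hJT | ⟨c, hc⟩ := (J \ T).eq_empty_or_nonempty
  · rwa [eq_of_subset_of_card_le (sdiff_eq_empty_iff_subset.1 hJT) hcard.le] at hJ
  obtain ⟨a, ha⟩ : (T \ J).Nonempty := by
    rw [← card_pos, card_sdiff_comm hcard]
    exact card_pos.2 ⟨c, hc⟩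
  have hsmaller : insert a (J.erase c) \ T ⊂ J \ T := by
    rw [insert_sdiff_of_mem _ (mem_sdiff.1 ha).1, erase_sdiff_comm]
    exact erase_ssubset hc
  rw [mem_sdiff] at hc ha
  have hcard' : #(insert a (J.erase c)) = #J := by
    rw [card_insert_of_notMem (fun h => ha.2 (mem_of_mem_erase h)), card_erase_of_mem hc.1]
    have := card_pos.2 ⟨c, hc.1⟩
    omega
  refine ih _ (hn ▸ card_lt_card hsmaller) (hJ.insert_erase hpos hμ ha.2 hzJ (hz a) hc.1)
    (hcard' ▸ hμ) (mem_insert_of_mem (mem_erase.2 ⟨ne_of_mem_of_not_mem hzT hc.2, hzJ⟩))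
    (hcard'.symm ▸ hcard) rfl

theorem sigmaL_eq_of_isLong_iff {p : Fin r → Prop} [DecidablePred p] {k : ℕ}
    (h : ∀ J, IsLong ℓ J ↔ k ≤ #(J.filter p)) {J : Finset (Fin r)} (hJ : IsLong ℓ J) :
    sigmaL ℓ J = if #(J.filter p) = k then k else 0 := by
  classical
  have hk := (h J).1 hJ
  have hshort : ∀ j ∈ J, ¬IsLong ℓ (J.erase j) ↔ p j ∧ #(J.filter p) = k := by
    intro j hj
    rw [h, filter_erase, not_le]
    by_cases hp : p j
    · rw [card_erase_of_mem (mem_filter.2 ⟨hj, hp⟩)]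
      have := card_pos.2 ⟨j, mem_filter.2 ⟨hj, hp⟩⟩
      simp only [hp, true_and]
      omega
    · rw [erase_eq_of_notMem (fun h => hp (mem_filter.1 h).2)]
      simp only [hp, false_and, iff_false, not_lt, hk]
  unfold sigmaL
  rw [filter_congr hshort]
  split_ifs with hcard
  · simp only [hcard, and_true]
  · simp [hcard]

theorem muL_eq_of_isLong_iff {p : Fin r → Prop} [DecidablePred p] {k : ℕ} (hk : 0 < k)
    (h : ∀ J, IsLong ℓ J ↔ k ≤ #(J.filter p)) {A : Finset (Fin r)} (hA : #(A.filter p) = k) :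
    muL ℓ = k := by
  have hAlong := (h A).2 hA.ge
  refine IsLeast.csInf_eq
    ⟨⟨hk, A, hAlong, by rw [sigmaL_eq_of_isLong_iff h hAlong, if_pos hA]⟩, ?_⟩
  rintro n ⟨hn, J, hJ, rfl⟩
  rw [sigmaL_eq_of_isLong_iff h hJ] at hn ⊢
  split_ifs at hn ⊢ <;> omega

end LengthVector

section EvenLength

variable {m : ℕ} {ℓ : Fin (2 * m + 2) → ℝ}

def middle (m : ℕ) : Finset (Fin (2 * m + 2)) :=
  Icc ⟨1, by omega⟩ ⟨m + 1, by omega⟩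

theorem mem_middle {j : Fin (2 * m + 2)} : j ∈ middle m ↔ 1 ≤ (j : ℕ) ∧ (j : ℕ) ≤ m + 1 := by
  simp [middle, Fin.le_def]

theorem card_middle : #(middle m) = m + 1 := by
  simp [middle, Fin.card_Icc]

theorem card_compl_middle : #(middle m)ᶜ = m + 1 := by
  rw [card_compl, card_middle, Fintype.card_fin]
  omega

theorem not_isLong_Iic (hpos : ∀ j, 0 ≤ ℓ j) (hmono : Monotone ℓ) :
    ¬IsLong ℓ (Iic ⟨m, by omega⟩) := by
  refine not_lt.2 (sum_le_sum_of_card_le_of_separated (hpos ⟨m, by omega⟩) ?_ ?_ ?_)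
  · rw [card_compl, Fin.card_Iic, Fintype.card_fin, Fin.val_mk]
    omega
  · intro i hi
    exact hmono (mem_Iic.1 (mem_sdiff.1 hi).1)
  · intro i hi
    simp only [mem_sdiff, mem_compl, mem_Iic, not_le] at hi
    exact hmono hi.1.le

theorem isLong_middle (hg : IsGeneric ℓ) (hpos : ∀ j, 0 ≤ ℓ j) (hmono : Monotone ℓ)
    (hμ : m + 1 ≤ muL ℓ) : IsLong ℓ (middle m) := by
  by_contra h
  refine not_isLong_Iic hpos hmono ((hg.isLong_compl h).of_card_eq hpos (z := ⟨0, by omega⟩)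
    (fun j => hmono (Fin.zero_le j)) (by rwa [card_compl_middle]) ?_ ?_ ?_)
  · simp [mem_middle]
  · simp
  · rw [Fin.card_Iic, card_compl_middle]

theorem le_card_filter_of_isLong (hpos : ∀ j, 0 ≤ ℓ j) (hmono : Monotone ℓ)
    (hA : IsLong ℓ (middle m)) {J : Finset (Fin (2 * m + 2))} (hJ : IsLong ℓ J) :
    m + 1 ≤ #(J.filter fun j : Fin (2 * m + 2) => 1 ≤ (j : ℕ)) := by
  by_contra! hsmall
  set z : Fin (2 * m + 2) := ⟨0, by omega⟩
  set p : Fin (2 * m + 2) := ⟨m + 1, by omega⟩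
  have hJz : J ⊆ insert z (J.filter fun j : Fin (2 * m + 2) => 1 ≤ (j : ℕ)) := fun j hj => by
    rcases Nat.eq_zero_or_pos j with h | h
    · exact mem_insert.2 (.inl (Fin.ext h))
    · exact mem_insert_of_mem (mem_filter.2 ⟨hj, h⟩)
  have hcard : #(insert z J) ≤ #(middle m)ᶜ := by
    rw [card_compl_middle]
    exact (card_le_card (insert_subset (mem_insert_self z _) hJz)).trans
      ((card_insert_le _ _).trans (by omega))
  have hsum : ∑ j ∈ insert z J, ℓ j ≤ ∑ j ∈ (middle m)ᶜ, ℓ j := by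
    refine sum_le_sum_of_card_le_of_separated (hpos p) hcard (fun i hi => ?_) (fun i hi => ?_)
    · simp only [mem_sdiff, mem_compl, not_not, mem_middle] at hi
      exact hmono (Fin.le_def.2 hi.2.2)
    · simp only [mem_sdiff, mem_compl, mem_middle, mem_insert, not_or, not_and, not_le] at hi
      have : (i : ℕ) ≠ 0 := fun h => hi.2.1 (Fin.ext h)
      exact hmono (Fin.le_def.2 (by have := hi.1; simp only [p]; omega))
  exact hA.not_isLong_compl (hJ.of_sum_le (le_trans
    (sum_le_sum_of_subset_of_nonneg (subset_insert z J) fun j _ _ => hpos j) hsum))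

theorem isLong_of_le_card_filter (hpos : ∀ j, 0 ≤ ℓ j) (hmono : Monotone ℓ)
    (hA : IsLong ℓ (middle m)) {J : Finset (Fin (2 * m + 2))}
    (hJ : m + 1 ≤ #(J.filter fun j : Fin (2 * m + 2) => 1 ≤ (j : ℕ))) : IsLong ℓ J := by
  set p : Fin (2 * m + 2) := ⟨m + 1, by omega⟩
  obtain ⟨S, hSJ, hS⟩ := exists_subset_card_eq hJ
  have hsum : ∑ j ∈ middle m, ℓ j ≤ ∑ j ∈ S, ℓ j := by
    refine sum_le_sum_of_card_le_of_separated (hpos p) (by rw [card_middle, hS])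
      (fun i hi => ?_) (fun i hi => ?_)
    · exact hmono (Fin.le_def.2 (mem_middle.1 (mem_sdiff.1 hi).1).2)
    · obtain ⟨hiS, hiA⟩ := mem_sdiff.1 hi
      have := (mem_filter.1 (hSJ hiS)).2
      rw [mem_middle] at hiA
      exact hmono (Fin.le_def.2 (by simp only [p]; omega))
  exact hA.of_sum_le (hsum.trans
    (sum_le_sum_of_subset_of_nonneg (hSJ.trans (filter_subset _ _)) fun j _ _ => hpos j))

end EvenLength

theorem mu_eq_succ_iff_equilateral_even {r m : ℕ} (hr : r = 2 * m + 2)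
    (ℓ : Fin r → ℝ) (hg : IsGeneric ℓ) (hpos : ∀ j, 0 ≤ ℓ j)
    (hmono : Monotone ℓ) :
    muL ℓ = m + 1 ↔
      ∀ J : Finset (Fin r), IsLong ℓ J ↔
        m + 1 ≤ (J.filter (fun j : Fin r => 1 ≤ (j : ℕ))).card := by
  subst hr
  constructor
  · intro hμ
    have hA := isLong_middle hg hpos hmono hμ.ge
    exact fun J =>
      ⟨le_card_filter_of_isLong hpos hmono hA, isLong_of_le_card_filter hpos hmono hA⟩
  · intro h
    refine muL_eq_of_isLong_iff m.succ_pos h (A := middle m) ?_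
    rw [filter_true_of_mem fun j hj => (mem_middle.1 hj).1, card_middle]
end
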